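/- arXiv:0911.1575 — 3 statements merged into one kernel-verified Lean document; each statement's English description precedes it below -/
import Mathlib

section
/- Let f : [0, ∞) → ℝ be continuous with f(0) = x, and for a > 0 define T_D(a) = inf{t ≥ 0 : sup_{s≤t} f(s) − f(t) = a}, T_U(a) = inf{t ≥ 0 : f(t) − inf_{s≤t} f(s) = a}, and ρ(a) = inf{t ≥ 0 : sup_{s≤t} f(s) − inf_{s≤t} f(s) = a} (with inf ∅ = ∞). Then min(T_D(a), T_U(a)) = ρ(a). -/
/-
The range is the sum of the drawdown and the drawup, both nonnegative; being continuous and `0` at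
time `0`, it reaches `a` (by the intermediate value theorem) no later than either of them does.
Conversely, the range at time `t` is already attained at the later `r ≤ t` of the times where the
maximum and the minimum of `f` over `[0, t]` are reached, and at `r` the function sits at its
running maximum (so the drawup equals the range) or at its running minimum (so the drawdown does).
-/

open Set ENNReal

noncomputable def DD (f : ℝ → ℝ) (t : ℝ) : ℝ := sSup (f '' Set.Icc 0 t) - f t
noncomputable def DU (f : ℝ → ℝ) (t : ℝ) : ℝ := f t - sInf (f '' Set.Icc 0 t)
noncomputable def Rg (f : ℝ → ℝ) (t : ℝ) : ℝ := sSup (f '' Set.Icc 0 t) - sInf (f '' Set.Icc 0 t)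

/-- First time the process `g` hits level `a` (over `t ≥ 0`), with value `∞` if it never does. -/
noncomputable def hitTime (g : ℝ → ℝ) (a : ℝ) : ℝ≥0∞ :=
  sInf {u : ℝ≥0∞ | ∃ t : ℝ, 0 ≤ t ∧ u = ENNReal.ofReal t ∧ g t = a}

section HitTime

variable {g : ℝ → ℝ} {a : ℝ}

lemma hitTime_le_ofReal {s t : ℝ} (hs : s ∈ Icc 0 t) (hg : g s = a) :
    hitTime g a ≤ ENNReal.ofReal t :=
  calc hitTime g a ≤ ENNReal.ofReal s := sInf_le ⟨s, hs.1, rfl, hg⟩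
    _ ≤ ENNReal.ofReal t := ENNReal.ofReal_le_ofReal hs.2

lemma le_hitTime {c : ℝ≥0∞} (h : ∀ t, 0 ≤ t → g t = a → c ≤ ENNReal.ofReal t) :
    c ≤ hitTime g a :=
  le_sInf <| by rintro _ ⟨t, ht, rfl, hgt⟩; exact h t ht hgt

lemma hitTime_le_of_le (hg : ContinuousOn g (Ici 0)) (hg0 : g 0 ≤ a) {t : ℝ} (ht : 0 ≤ t)
    (hat : a ≤ g t) : hitTime g a ≤ ENNReal.ofReal t := by
  obtain ⟨s, hs, hgs⟩ := intermediate_value_Icc ht (hg.mono Icc_subset_Ici_self) ⟨hg0, hat⟩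
  exact hitTime_le_ofReal hs hgs

lemma hitTime_le_hitTime_of_le {h : ℝ → ℝ} (hg : ContinuousOn g (Ici 0)) (hg0 : g 0 ≤ a)
    (hhg : ∀ t, 0 ≤ t → h t ≤ g t) : hitTime g a ≤ hitTime h a :=
  le_hitTime fun t ht hht => hitTime_le_of_le hg hg0 ht (hht ▸ hhg t ht)

lemma min_hitTime_le_hitTime {h₁ h₂ : ℝ → ℝ}
    (h : ∀ t, 0 ≤ t → g t = a → ∃ r ∈ Icc 0 t, h₁ r = a ∨ h₂ r = a) :
    min (hitTime h₁ a) (hitTime h₂ a) ≤ hitTime g a :=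
  le_hitTime fun t ht hgt => by
    obtain ⟨r, hr, h₁r | h₂r⟩ := h t ht hgt
    · exact (min_le_left _ _).trans (hitTime_le_ofReal hr h₁r)
    · exact (min_le_right _ _).trans (hitTime_le_ofReal hr h₂r)

end HitTime

lemma image_Icc_zero_eq_image_Icc_zero_one (f : ℝ → ℝ) {t : ℝ} (ht : 0 ≤ t) :
    f '' Icc 0 t = (fun u => f (max (u * t) 0)) '' Icc 0 1 := by
  have hclamp : ∀ u ∈ Icc (0 : ℝ) 1, f (max (u * t) 0) = f (u * t) := fun u hu => by
    rw [max_eq_left (mul_nonneg hu.1 ht)]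
  rw [image_congr hclamp, ← image_image f (· * t), image_mul_right_Icc zero_le_one ht,
    zero_mul, one_mul]

section RunningExtrema

variable {f : ℝ → ℝ}

/-- Rescaling `[0, t]` to `[0, 1]` turns the running extrema into extrema over a fixed compact
set of the function `(t, u) ↦ f (max (u * t) 0)`, which is jointly continuous thanks to the
clamping at `0`. -/
lemma continuousOn_Rg (hf : ContinuousOn f (Ici 0)) : ContinuousOn (Rg f) (Ici 0) := by
  have hF : Continuous fun p : ℝ × ℝ => f (max (p.2 * p.1) 0) :=
    hf.comp_continuous (by fun_prop) fun p => mem_Ici.2 (le_max_right _ _)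
  have hcont : Continuous fun t : ℝ => sSup ((fun u => f (max (u * t) 0)) '' Icc 0 1) -
      sInf ((fun u => f (max (u * t) 0)) '' Icc 0 1) :=
    (isCompact_Icc.continuous_sSup hF).sub (isCompact_Icc.continuous_sInf hF)
  refine hcont.continuousOn.congr fun t ht => ?_
  simp only [Rg, image_Icc_zero_eq_image_Icc_zero_one f ht]

lemma Rg_zero : Rg f 0 = 0 := by simp [Rg]

lemma DD_add_DU (t : ℝ) : DD f t + DU f t = Rg f t := by
  simp only [DD, DU, Rg]; ring

lemma DD_nonneg (hf : ContinuousOn f (Ici 0)) {t : ℝ} (ht : 0 ≤ t) : 0 ≤ DD f t :=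
  sub_nonneg.2 <| (hf.mono Icc_subset_Ici_self).le_sSup_image_Icc ⟨ht, le_rfl⟩

lemma DU_nonneg (hf : ContinuousOn f (Ici 0)) {t : ℝ} (ht : 0 ≤ t) : 0 ≤ DU f t :=
  sub_nonneg.2 <| (hf.mono Icc_subset_Ici_self).sInf_image_Icc_le ⟨ht, le_rfl⟩

lemma DD_le_Rg (hf : ContinuousOn f (Ici 0)) {t : ℝ} (ht : 0 ≤ t) : DD f t ≤ Rg f t := by
  linarith [DD_add_DU (f := f) t, DU_nonneg hf ht]

lemma DU_le_Rg (hf : ContinuousOn f (Ici 0)) {t : ℝ} (ht : 0 ≤ t) : DU f t ≤ Rg f t := by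
  linarith [DD_add_DU (f := f) t, DD_nonneg hf ht]

lemma exists_Rg_eq_and_DD_or_DU_eq_zero (hf : ContinuousOn f (Ici 0)) {t : ℝ} (ht : 0 ≤ t) :
    ∃ r ∈ Icc 0 t, Rg f r = Rg f t ∧ (DD f r = 0 ∨ DU f r = 0) := by
  have hft := hf.mono (Icc_subset_Ici_self : Icc 0 t ⊆ Ici 0)
  obtain ⟨s₀, hs₀, hmax⟩ := isCompact_Icc.exists_isMaxOn (nonempty_Icc.2 ht) hft
  obtain ⟨s₁, hs₁, hmin⟩ := isCompact_Icc.exists_isMinOn (nonempty_Icc.2 ht) hft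
  set r := max s₀ s₁
  have hr : Icc 0 r ⊆ Icc 0 t := Icc_subset_Icc_right (max_le hs₀.2 hs₁.2)
  have hsup : ∀ u, s₀ ∈ Icc 0 u → Icc 0 u ⊆ Icc 0 t → sSup (f '' Icc 0 u) = f s₀ :=
    fun u hs hu => IsGreatest.csSup_eq
      ⟨mem_image_of_mem f hs, forall_mem_image.2 fun y hy => isMaxOn_iff.1 hmax y (hu hy)⟩
  have hinf : ∀ u, s₁ ∈ Icc 0 u → Icc 0 u ⊆ Icc 0 t → sInf (f '' Icc 0 u) = f s₁ :=
    fun u hs hu => IsLeast.csInf_eq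
      ⟨mem_image_of_mem f hs, forall_mem_image.2 fun y hy => isMinOn_iff.1 hmin y (hu hy)⟩
  have hs₀r : s₀ ∈ Icc 0 r := ⟨hs₀.1, le_max_left _ _⟩
  have hs₁r : s₁ ∈ Icc 0 r := ⟨hs₁.1, le_max_right _ _⟩
  refine ⟨r, hr ⟨hs₀.1.trans (le_max_left _ _), le_rfl⟩, ?_, ?_⟩
  · simp only [Rg, hsup r hs₀r hr, hinf r hs₁r hr, hsup t hs₀ subset_rfl, hinf t hs₁ subset_rfl]
  · rcases max_choice s₀ s₁ with h | h
    · left; rw [DD, hsup r hs₀r hr, show r = s₀ from h, sub_self]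
    · right; rw [DU, hinf r hs₁r hr, show r = s₁ from h, sub_self]

end RunningExtrema

theorem stmt_1_general (f : ℝ → ℝ) (hf : ContinuousOn f (Set.Ici 0))
    (a : ℝ) (ha : 0 < a) :
    min (hitTime (DD f) a) (hitTime (DU f) a) = hitTime (Rg f) a := by
  have hRg0 : Rg f 0 ≤ a := Rg_zero.trans_le ha.le
  refine le_antisymm (min_hitTime_le_hitTime fun t ht hRt => ?_) (le_min ?_ ?_)
  · obtain ⟨r, hr, hRr, hr0⟩ := exists_Rg_eq_and_DD_or_DU_eq_zero hf ht
    have hsum := DD_add_DU (f := f) r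
    refine ⟨r, hr, ?_⟩
    rcases hr0 with hDD | hDU
    · right; linarith
    · left; linarith
  · exact hitTime_le_hitTime_of_le (continuousOn_Rg hf) hRg0 fun t ht => DD_le_Rg hf ht
  · exact hitTime_le_hitTime_of_le (continuousOn_Rg hf) hRg0 fun t ht => DU_le_Rg hf ht

theorem stmt_1 (f : ℝ → ℝ) (x : ℝ) (hf : ContinuousOn f (Set.Ici 0)) (hx : f 0 = x)
    (a : ℝ) (ha : 0 < a) :
    min (hitTime (DD f) a) (hitTime (DU f) a) = hitTime (Rg f) a :=
  stmt_1_general f hf a ha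
end

section
/- Let f : [0, ∞) → ℝ be continuous with f(0) = x, let a > b > 0, and suppose T_D(a) < ∞ and T_D(a) < T_U(b). Let u = f(T_D(b)). Then T_D(b) ≤ T_D(a) and T_D(a) = T_D(b) + inf{t ≥ 0 : f(T_D(b) + t) = u − a + b}, i.e. after time T_D(b) the path first descends to level u − (a−b), at which moment the drawdown first reaches a. -/
open Set

lemma runSup_contOn (f : ℝ → ℝ) (T : ℝ) (hf : ContinuousOn f (Icc 0 T)) :
    ContinuousOn (fun t => sSup (f '' Icc 0 t)) (Icc 0 T) := by
  have huc : UniformContinuousOn f (Icc 0 T) :=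
    isCompact_Icc.uniformContinuousOn_of_continuous hf
  have hbdd : ∀ u ∈ Icc (0:ℝ) T, BddAbove (f '' Icc 0 u) := fun u hu =>
    (isCompact_Icc.image_of_continuousOn (hf.mono (Icc_subset_Icc le_rfl hu.2))).bddAbove
  have hne : ∀ u ∈ Icc (0:ℝ) T, (f '' Icc 0 u).Nonempty := fun u hu =>
    ⟨f 0, mem_image_of_mem f ⟨le_rfl, hu.1⟩⟩
  intro t₀ ht₀
  rw [Metric.continuousWithinAt_iff]
  intro ε hε
  obtain ⟨δ, hδ, hδ'⟩ := Metric.uniformContinuousOn_iff.mp huc (ε/2) (by linarith)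
  refine ⟨δ, hδ, fun t ht hdist => ?_⟩
  have key : ∀ s u : ℝ, s ∈ Icc (0:ℝ) T → u ∈ Icc (0:ℝ) T → s ≤ u → u - s < δ →
      sSup (f '' Icc 0 s) ≤ sSup (f '' Icc 0 u) ∧
      sSup (f '' Icc 0 u) ≤ sSup (f '' Icc 0 s) + ε/2 := by
    intro s u hs hu hsu hd
    constructor
    · exact csSup_le_csSup (hbdd u hu) (hne s hs) (image_mono (f := f) (Icc_subset_Icc le_rfl hsu))
    · refine csSup_le (hne u hu) ?_
      rintro y ⟨v, hv, rfl⟩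
      rcases le_total v s with hvs | hvs
      · have : f v ≤ sSup (f '' Icc 0 s) :=
          le_csSup (hbdd s hs) (mem_image_of_mem f ⟨hv.1, hvs⟩)
        linarith
      · have hvmem : v ∈ Icc (0:ℝ) T := ⟨hv.1, le_trans hv.2 hu.2⟩
        have hdvs : dist v s < δ := by
          rw [Real.dist_eq, abs_of_nonneg (by linarith)]
          linarith [hv.2]
        have h1 := hδ' v hvmem s hs hdvs
        rw [Real.dist_eq] at h1
        have h2 := abs_lt.mp h1
        have hfs : f s ≤ sSup (f '' Icc 0 s) :=
          le_csSup (hbdd s hs) (mem_image_of_mem f ⟨hs.1, le_rfl⟩)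
        linarith
  rw [Real.dist_eq] at hdist ⊢
  rcases le_total t t₀ with h | h
  · obtain ⟨h1, h2⟩ := key t t₀ ht ht₀ h
      (by rw [abs_sub_comm] at hdist; exact lt_of_le_of_lt (le_abs_self _) hdist)
    rw [abs_lt]; constructor <;> linarith
  · obtain ⟨h1, h2⟩ := key t₀ t ht₀ ht h (lt_of_le_of_lt (le_abs_self _) hdist)
    rw [abs_lt]; constructor <;> linarith

lemma runInf_contOn (f : ℝ → ℝ) (T : ℝ) (hf : ContinuousOn f (Icc 0 T)) :
    ContinuousOn (fun t => sInf (f '' Icc 0 t)) (Icc 0 T) := by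
  have h := runSup_contOn (fun u => -f u) T hf.neg
  have heq : ∀ t : ℝ, sInf (f '' Icc 0 t) = -sSup ((fun u => -f u) '' Icc 0 t) := by
    intro t
    have himg : (fun u => -f u) '' Icc 0 t = -(f '' Icc 0 t) := by
      ext y; simp only [Set.mem_neg, mem_image, mem_Icc]
      constructor <;> rintro ⟨v, hv, hy⟩ <;> exact ⟨v, hv, by linarith⟩
    rw [himg, Real.sInf_def]
  have := h.neg
  refine this.congr fun t ht => ?_
  simp only [heq t, neg_neg, Pi.neg_apply]

theorem stmt_4 (f : ℝ → ℝ) (x : ℝ) (hf : ContinuousOn f (Set.Ici 0)) (hx : f 0 = x)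
    (a b : ℝ) (hb : 0 < b) (hab : b < a) (tDa tDb : ℝ)
    (hTDa : IsLeast {t : ℝ | 0 ≤ t ∧ DD f t = a} tDa)
    (hTDb : IsLeast {t : ℝ | 0 ≤ t ∧ DD f t = b} tDb)
    -- T_D(a) < T_U(b): the drawup does not reach `b` up to (and including) time `tDa`
    (hprec : ∀ t ∈ Set.Icc 0 tDa, DU f t ≠ b) :
    tDb ≤ tDa ∧
      IsLeast {t : ℝ | 0 ≤ t ∧ f (tDb + t) = f tDb - a + b} (tDa - tDb) := by
  obtain ⟨⟨h0a, hDDa⟩, lbA⟩ := hTDa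
  obtain ⟨⟨h0b, hDDb⟩, lbB⟩ := hTDb
  have hsubIci : ∀ u : ℝ, 0 ≤ u → Icc (0:ℝ) u ⊆ Ici (0:ℝ) := fun u _ v hv => hv.1
  have hfa : ContinuousOn f (Icc 0 tDa) := hf.mono (hsubIci tDa h0a)
  have hDDcont : ContinuousOn (DD f) (Icc 0 tDa) := by
    unfold DD; exact (runSup_contOn f tDa hfa).sub hfa
  have hDUcont : ContinuousOn (DU f) (Icc 0 tDa) := by
    unfold DU; exact hfa.sub (runInf_contOn f tDa hfa)
  have hDD0 : DD f 0 = 0 := by simp [DD]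
  have hDU0 : DU f 0 = 0 := by simp [DU]
  have hbddA : ∀ u : ℝ, 0 ≤ u → BddAbove (f '' Icc 0 u) := fun u hu =>
    (isCompact_Icc.image_of_continuousOn (hf.mono (hsubIci u hu))).bddAbove
  have hbddB : ∀ u : ℝ, 0 ≤ u → BddBelow (f '' Icc 0 u) := fun u hu =>
    (isCompact_Icc.image_of_continuousOn (hf.mono (hsubIci u hu))).bddBelow
  -- Step 1: DU < b on [0, tDa]
  have hDUlt : ∀ t ∈ Icc (0:ℝ) tDa, DU f t < b := by
    intro t ht
    by_contra hcon
    push_neg at hcon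
    have hsub : Icc (0:ℝ) t ⊆ Icc 0 tDa := Icc_subset_Icc le_rfl ht.2
    have hbmem : b ∈ Icc (DU f 0) (DU f t) := by rw [hDU0]; exact ⟨hb.le, hcon⟩
    obtain ⟨t', ht', hDUt'⟩ := intermediate_value_Icc ht.1 (hDUcont.mono hsub) hbmem
    exact hprec t' (hsub ht') hDUt'
  -- Step 0: tDb ≤ tDa
  have hba : tDb ≤ tDa := by
    have hbmem : b ∈ Icc (DD f 0) (DD f tDa) := by
      rw [hDD0, hDDa]; exact ⟨hb.le, hab.le⟩
    obtain ⟨t', ht', hDDt'⟩ := intermediate_value_Icc h0a hDDcont hbmem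
    exact le_trans (lbB ⟨ht'.1, hDDt'⟩) ht'.2
  set M := sSup (f '' Icc 0 tDb) with hMdef
  have hftDb : f tDb = M - b := by
    have : M - f tDb = b := hDDb
    linarith
  -- Step 2: running sup is constant on [tDb, tDa]
  have hMsup : ∀ t ∈ Icc tDb tDa, sSup (f '' Icc 0 t) = M := by
    intro t ht
    have ht0 : (0:ℝ) ≤ t := le_trans h0b ht.1
    apply le_antisymm
    · refine csSup_le ⟨f 0, mem_image_of_mem f ⟨le_rfl, ht0⟩⟩ ?_
      rintro y ⟨s, hs, rfl⟩
      rcases le_total s tDb with h1 | h1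
      · exact le_csSup (hbddA tDb h0b) (mem_image_of_mem f ⟨hs.1, h1⟩)
      · by_contra hcon
        push_neg at hcon
        have hs0 : (0:ℝ) ≤ s := hs.1
        have hsInf : sInf (f '' Icc 0 s) ≤ f tDb :=
          csInf_le (hbddB s hs0) (mem_image_of_mem f ⟨h0b, h1⟩)
        have hDUs : b < DU f s := by
          unfold DU; rw [hftDb] at hsInf; linarith
        have hsmem : s ∈ Icc (0:ℝ) tDa := ⟨hs0, le_trans hs.2 ht.2⟩
        linarith [hDUlt s hsmem]
    · exact csSup_le_csSup (hbddA t ht0) ⟨f 0, mem_image_of_mem f ⟨le_rfl, h0b⟩⟩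
        (image_mono (f := f) (Icc_subset_Icc le_rfl ht.1))
  have hfta : f tDa = M - a := by
    have h1 : sSup (f '' Icc 0 tDa) - f tDa = a := hDDa
    rw [hMsup tDa ⟨hba, le_rfl⟩] at h1
    linarith
  refine ⟨hba, ⟨⟨by linarith, ?_⟩, ?_⟩⟩
  · have : tDb + (tDa - tDb) = tDa := by ring
    rw [this, hfta, hftDb]; ring
  · rintro t ⟨ht0, hft⟩
    by_contra hcon
    push_neg at hcon
    have hmem : tDb + t ∈ Icc tDb tDa := ⟨by linarith, by linarith⟩
    have hDDt : DD f (tDb + t) = a := by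
      unfold DD; rw [hMsup _ hmem, hft, hftDb]; ring
    have := lbA ⟨by linarith, hDDt⟩
    linarith
end

section
/- Let f : [0, ∞) → ℝ be continuous with f(0) = x, b ≥ a > 0, and suppose T_U(b) < T_D(a) < ∞. Then T_D(a) = T_U(b) + T_D^g(a), where g(t) = f(T_U(b) + t) is the shifted path and T_D^g(a) is the first time the drawdown of g reaches a. -/
open Set

section Aux

variable {f : ℝ → ℝ}

private lemma icc_subset_ici {s t : ℝ} (hs : 0 ≤ s) : Set.Icc s t ⊆ Set.Ici 0 :=
  fun _u hu => le_trans hs hu.1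

private lemma bddAbove_img (hf : ContinuousOn f (Set.Ici 0)) {s t : ℝ} (hs : 0 ≤ s) :
    BddAbove (f '' Set.Icc s t) :=
  (isCompact_Icc.image_of_continuousOn (hf.mono (icc_subset_ici hs))).bddAbove

private lemma bddBelow_img (hf : ContinuousOn f (Set.Ici 0)) {s t : ℝ} (hs : 0 ≤ s) :
    BddBelow (f '' Set.Icc s t) :=
  (isCompact_Icc.image_of_continuousOn (hf.mono (icc_subset_ici hs))).bddBelow

private lemma sup_split (hf : ContinuousOn f (Set.Ici 0)) {s t : ℝ} (h0 : 0 ≤ s) (hst : s ≤ t) :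
    sSup (f '' Set.Icc 0 t) = sSup (f '' Set.Icc 0 s) ⊔ sSup (f '' Set.Icc s t) := by
  rw [← Set.Icc_union_Icc_eq_Icc h0 hst, Set.image_union,
    csSup_union (bddAbove_img hf le_rfl) ((Set.nonempty_Icc.2 h0).image f)
      (bddAbove_img hf h0) ((Set.nonempty_Icc.2 hst).image f)]

private lemma inf_split (hf : ContinuousOn f (Set.Ici 0)) {s t : ℝ} (h0 : 0 ≤ s) (hst : s ≤ t) :
    sInf (f '' Set.Icc 0 t) = sInf (f '' Set.Icc 0 s) ⊓ sInf (f '' Set.Icc s t) := by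
  rw [← Set.Icc_union_Icc_eq_Icc h0 hst, Set.image_union,
    csInf_union (bddBelow_img hf le_rfl) ((Set.nonempty_Icc.2 h0).image f)
      (bddBelow_img hf h0) ((Set.nonempty_Icc.2 hst).image f)]

private lemma le_sup_self (hf : ContinuousOn f (Set.Ici 0)) {t : ℝ} (ht : 0 ≤ t) :
    f t ≤ sSup (f '' Set.Icc 0 t) :=
  le_csSup (bddAbove_img hf le_rfl) ⟨t, ⟨ht, le_rfl⟩, rfl⟩

private lemma inf_le_self (hf : ContinuousOn f (Set.Ici 0)) {t : ℝ} (ht : 0 ≤ t) :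
    sInf (f '' Set.Icc 0 t) ≤ f t :=
  csInf_le (bddBelow_img hf le_rfl) ⟨t, ⟨ht, le_rfl⟩, rfl⟩

private lemma DD_zero : DD f 0 = 0 := by
  simp [DD, Set.Icc_self]

private lemma DU_zero : DU f 0 = 0 := by
  simp [DU, Set.Icc_self]

private lemma contM (hf : ContinuousOn f (Set.Ici 0)) :
    ContinuousOn (fun t => sSup (f '' Set.Icc 0 t)) (Set.Ici 0) := by
  intro t0 ht0
  rw [Metric.continuousWithinAt_iff]
  intro ε hε
  obtain ⟨δ, hδ, hδf⟩ := Metric.continuousWithinAt_iff.1 (hf t0 ht0) (ε / 3) (by linarith)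
  refine ⟨δ, hδ, fun t ht hdist => ?_⟩
  have ht' : (0 : ℝ) ≤ t := ht
  have ht0' : (0 : ℝ) ≤ t0 := ht0
  rw [Real.dist_eq] at hdist ⊢
  have hdist' := abs_lt.1 hdist
  have key : ∀ s u : ℝ, 0 ≤ s → s ≤ u → (∀ v ∈ Set.Icc s u, |v - t0| < δ) →
      sSup (f '' Set.Icc s u) ≤ f t0 + ε / 3 := by
    intro s u hs hsu hv
    refine csSup_le ((Set.nonempty_Icc.2 hsu).image f) ?_
    rintro y ⟨v, hvmem, rfl⟩
    have h1 : dist (f v) (f t0) < ε / 3 :=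
      hδf (le_trans hs hvmem.1) (by rw [Real.dist_eq]; exact hv v hvmem)
    rw [Real.dist_eq] at h1
    have h2 := abs_lt.1 h1
    linarith [h2.1, h2.2]
  rcases le_total t0 t with hc | hc
  · have hsplit := sup_split hf ht0' hc
    have h1 : sSup (f '' Set.Icc t0 t) ≤ f t0 + ε / 3 := by
      refine key t0 t ht0' hc fun v hv => abs_lt.2 ⟨by linarith [hv.1], by linarith [hv.2, hdist'.2]⟩
    have hf0 : f t0 ≤ sSup (f '' Set.Icc 0 t0) := le_sup_self hf ht0'
    have hMle : sSup (f '' Set.Icc 0 t) ≤ sSup (f '' Set.Icc 0 t0) + ε / 3 := by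
      rw [hsplit]; exact sup_le (by linarith) (by linarith)
    have hMge : sSup (f '' Set.Icc 0 t0) ≤ sSup (f '' Set.Icc 0 t) := by
      rw [hsplit]; exact le_sup_left
    rw [abs_lt]; constructor <;> linarith
  · have hsplit := sup_split hf ht' hc
    have hft : dist (f t) (f t0) < ε / 3 := hδf ht (by rw [Real.dist_eq]; exact hdist)
    rw [Real.dist_eq] at hft
    have hft' := abs_lt.1 hft
    have h1 : sSup (f '' Set.Icc t t0) ≤ f t0 + ε / 3 := by
      refine key t t0 ht' hc fun v hv => abs_lt.2 ⟨by linarith [hv.1, hdist'.1], by linarith [hv.2]⟩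
    have hft_le : f t ≤ sSup (f '' Set.Icc 0 t) := le_sup_self hf ht'
    have hMle : sSup (f '' Set.Icc 0 t0) ≤ sSup (f '' Set.Icc 0 t) + (ε / 3 + ε / 3) := by
      rw [hsplit]; exact sup_le (by linarith) (by linarith [hft'.1])
    have hMge : sSup (f '' Set.Icc 0 t) ≤ sSup (f '' Set.Icc 0 t0) := by
      rw [hsplit]; exact le_sup_left
    rw [abs_lt]; constructor <;> linarith

private lemma contm (hf : ContinuousOn f (Set.Ici 0)) :
    ContinuousOn (fun t => sInf (f '' Set.Icc 0 t)) (Set.Ici 0) := by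
  intro t0 ht0
  rw [Metric.continuousWithinAt_iff]
  intro ε hε
  obtain ⟨δ, hδ, hδf⟩ := Metric.continuousWithinAt_iff.1 (hf t0 ht0) (ε / 3) (by linarith)
  refine ⟨δ, hδ, fun t ht hdist => ?_⟩
  have ht' : (0 : ℝ) ≤ t := ht
  have ht0' : (0 : ℝ) ≤ t0 := ht0
  rw [Real.dist_eq] at hdist ⊢
  have hdist' := abs_lt.1 hdist
  have key : ∀ s u : ℝ, 0 ≤ s → s ≤ u → (∀ v ∈ Set.Icc s u, |v - t0| < δ) →
      f t0 - ε / 3 ≤ sInf (f '' Set.Icc s u) := by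
    intro s u hs hsu hv
    refine le_csInf ((Set.nonempty_Icc.2 hsu).image f) ?_
    rintro y ⟨v, hvmem, rfl⟩
    have h1 : dist (f v) (f t0) < ε / 3 :=
      hδf (le_trans hs hvmem.1) (by rw [Real.dist_eq]; exact hv v hvmem)
    rw [Real.dist_eq] at h1
    have h2 := abs_lt.1 h1
    linarith [h2.1, h2.2]
  rcases le_total t0 t with hc | hc
  · have hsplit := inf_split hf ht0' hc
    have h1 : f t0 - ε / 3 ≤ sInf (f '' Set.Icc t0 t) := by
      refine key t0 t ht0' hc fun v hv => abs_lt.2 ⟨by linarith [hv.1], by linarith [hv.2, hdist'.2]⟩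
    have hf0 : sInf (f '' Set.Icc 0 t0) ≤ f t0 := inf_le_self hf ht0'
    have hMge : sInf (f '' Set.Icc 0 t0) - ε / 3 ≤ sInf (f '' Set.Icc 0 t) := by
      rw [hsplit]; exact le_inf (by linarith) (by linarith)
    have hMle : sInf (f '' Set.Icc 0 t) ≤ sInf (f '' Set.Icc 0 t0) := by
      rw [hsplit]; exact inf_le_left
    rw [abs_lt]; constructor <;> linarith
  · have hsplit := inf_split hf ht' hc
    have hft : dist (f t) (f t0) < ε / 3 := hδf ht (by rw [Real.dist_eq]; exact hdist)
    rw [Real.dist_eq] at hft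
    have hft' := abs_lt.1 hft
    have h1 : f t0 - ε / 3 ≤ sInf (f '' Set.Icc t t0) := by
      refine key t t0 ht' hc fun v hv => abs_lt.2 ⟨by linarith [hv.1, hdist'.1], by linarith [hv.2]⟩
    have hft_le : sInf (f '' Set.Icc 0 t) ≤ f t := inf_le_self hf ht'
    have hMge : sInf (f '' Set.Icc 0 t) - (ε / 3 + ε / 3) ≤ sInf (f '' Set.Icc 0 t0) := by
      rw [hsplit]; exact le_inf (by linarith) (by linarith [hft'.2])
    have hMle : sInf (f '' Set.Icc 0 t0) ≤ sInf (f '' Set.Icc 0 t) := by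
      rw [hsplit]; exact inf_le_left
    rw [abs_lt]; constructor <;> linarith

private lemma contDD (hf : ContinuousOn f (Set.Ici 0)) : ContinuousOn (DD f) (Set.Ici 0) := by
  unfold DD; exact (contM hf).sub hf

private lemma contDU (hf : ContinuousOn f (Set.Ici 0)) : ContinuousOn (DU f) (Set.Ici 0) := by
  unfold DU; exact hf.sub (contm hf)

private lemma max_at_tU (hf : ContinuousOn f (Set.Ici 0)) {a b tU tD : ℝ}
    (ha : 0 < a) (hab : a ≤ b)
    (hTU : IsLeast {t : ℝ | 0 ≤ t ∧ DU f t = b} tU)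
    (hTD : IsLeast {t : ℝ | 0 ≤ t ∧ DD f t = a} tD)
    (hord : tU < tD) :
    sSup (f '' Set.Icc 0 tU) = f tU := by
  obtain ⟨⟨htU0, hDUtU⟩, htUmin⟩ := hTU
  obtain ⟨⟨htD0, hDDtD⟩, htDmin⟩ := hTD
  have hcomp : IsCompact (f '' Set.Icc 0 tU) :=
    isCompact_Icc.image_of_continuousOn (hf.mono (icc_subset_ici le_rfl))
  have hne : (f '' Set.Icc 0 tU).Nonempty := (Set.nonempty_Icc.2 htU0).image f
  obtain ⟨sstar, hsmem, hsval⟩ := hcomp.sSup_mem hne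
  obtain ⟨mstar, hmmem, hmval⟩ := hcomp.sInf_mem hne
  have hinf : sInf (f '' Set.Icc 0 tU) = f tU - b := by
    have h := hDUtU; unfold DU at h; linarith
  have hge : f tU ≤ f sstar := by rw [hsval]; exact le_sup_self hf htU0
  rcases le_total mstar sstar with hms | hms
  · -- minimum attained no later than the maximum
    have h1 : sInf (f '' Set.Icc 0 sstar) ≤ f mstar :=
      csInf_le (bddBelow_img hf le_rfl) ⟨mstar, ⟨hmmem.1, hms⟩, rfl⟩
    have hm : f mstar = f tU - b := by rw [hmval, hinf]
    have hDUs : b ≤ DU f sstar := by unfold DU; rw [hm] at h1; linarith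
    have hb : 0 < b := lt_of_lt_of_le ha hab
    have hcont : ContinuousOn (DU f) (Set.Icc 0 sstar) :=
      (contDU hf).mono (icc_subset_ici le_rfl)
    obtain ⟨t, htmem, htval⟩ := intermediate_value_Icc hsmem.1 hcont
      (⟨by rw [DU_zero]; linarith, hDUs⟩ : b ∈ Set.Icc (DU f 0) (DU f sstar))
    have htU : tU ≤ t := htUmin ⟨htmem.1, htval⟩
    have hstU : sstar = tU := le_antisymm hsmem.2 (le_trans htU htmem.2)
    rw [← hsval, hstU]
  · -- maximum attained before the minimum: contradiction with tU < tD
    exfalso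
    have hsups : f sstar ≤ sSup (f '' Set.Icc 0 mstar) :=
      le_csSup (bddAbove_img hf le_rfl) ⟨sstar, ⟨hsmem.1, hms⟩, rfl⟩
    have hm : f mstar = f tU - b := by rw [hmval, hinf]
    have hDDm : a ≤ DD f mstar := by unfold DD; rw [hm]; linarith
    have hcont : ContinuousOn (DD f) (Set.Icc 0 mstar) :=
      (contDD hf).mono (icc_subset_ici le_rfl)
    obtain ⟨t, htmem, htval⟩ := intermediate_value_Icc hmmem.1 hcont
      (⟨by rw [DD_zero]; linarith, hDDm⟩ : a ∈ Set.Icc (DD f 0) (DD f mstar))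
    have htD : tD ≤ t := htDmin ⟨htmem.1, htval⟩
    linarith [htmem.2, hmmem.2]

private lemma shiftDD (hf : ContinuousOn f (Set.Ici 0)) {tU : ℝ} (htU0 : 0 ≤ tU)
    (hmax : sSup (f '' Set.Icc 0 tU) = f tU) {t : ℝ} (ht : 0 ≤ t) :
    DD (fun s => f (tU + s)) t = DD f (tU + t) := by
  have himg : (fun s => f (tU + s)) '' Set.Icc 0 t = f '' Set.Icc tU (tU + t) := by
    rw [← Set.image_image f (fun s => tU + s), Set.image_const_add_Icc, add_zero]
  unfold DD
  rw [himg, sup_split hf htU0 (by linarith : tU ≤ tU + t), hmax,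
    sup_eq_right.2 (le_csSup (bddAbove_img hf htU0) ⟨tU, ⟨le_rfl, by linarith⟩, rfl⟩)]

end Aux

theorem stmt_16 (f : ℝ → ℝ) (x : ℝ) (hf : ContinuousOn f (Set.Ici 0)) (hx : f 0 = x)
    (a b : ℝ) (ha : 0 < a) (hab : a ≤ b) (tU tD : ℝ)
    (hTU : IsLeast {t : ℝ | 0 ≤ t ∧ DU f t = b} tU)
    (hTD : IsLeast {t : ℝ | 0 ≤ t ∧ DD f t = a} tD)
    (hord : tU < tD) :
    IsLeast {t : ℝ | 0 ≤ t ∧ DD (fun s => f (tU + s)) t = a} (tD - tU) := by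
  have htU0 : 0 ≤ tU := hTU.1.1
  have hmax := max_at_tU hf ha hab hTU hTD hord
  constructor
  · refine ⟨by linarith, ?_⟩
    rw [shiftDD hf htU0 hmax (by linarith : (0:ℝ) ≤ tD - tU)]
    have h : tU + (tD - tU) = tD := by ring
    rw [h]
    exact hTD.1.2
  · rintro t ⟨ht0, hDDt⟩
    rw [shiftDD hf htU0 hmax ht0] at hDDt
    have h := hTD.2 ⟨by linarith, hDDt⟩
    linarith
end
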